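/- arXiv:2204.00574 — 4 statements merged into one kernel-verified Lean document; each statement's English description precedes it below -/
import Mathlib

section
/- For any arithmetic function f : ℕ → ℂ and any k ≥ 2, the sum of f evaluated at the GCD over all factorizations of n into k factors equals the sum over pairs (d, δ) with d^k · δ = n of (μ * f)(d) · τ_k(δ), where μ is the Möbius function, * is Dirichlet convolution, and τ_k is the k-factors Piltz divisor function. -/
open Finset Filter

noncomputable section

/-- The set of ordered `k`-tuples of positive integers with product `n`. -/
def tuplesProd (k n : ℕ) : Finset (Fin k → ℕ) :=
  (Fintype.piFinset fun _ => n.divisors).filter fun v => ∏ i, v i = n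

/-- The Piltz divisor function `τ_k`. -/
def piltz (k n : ℕ) : ℕ := (tuplesProd k n).card

/-- Dirichlet convolution of the Möbius function with `f`. -/
def muConv (f : ℕ → ℂ) (d : ℕ) : ℂ :=
  ∑ p ∈ d.divisorsAntidiagonal, ((ArithmeticFunction.moebius p.1 : ℤ) : ℂ) * f p.2

def Faux (f : ℕ → ℂ) : ArithmeticFunction ℂ := ⟨fun n => if n = 0 then 0 else f n, by simp⟩

lemma muConv_eq (f : ℕ → ℂ) (d : ℕ) :
    muConv f d = (((ArithmeticFunction.moebius : ArithmeticFunction ℤ) :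
      ArithmeticFunction ℂ) * Faux f) d := by
  rw [ArithmeticFunction.mul_apply, muConv]
  refine Finset.sum_congr rfl fun p hp => ?_
  have h2 : p.2 ≠ 0 :=
    (Nat.pos_of_mem_divisors (Nat.snd_mem_divisors_of_mem_antidiagonal hp)).ne'
  simp [Faux, ArithmeticFunction.intCoe_apply, h2]

lemma sum_muConv (f : ℕ → ℂ) (g : ℕ) (hg : g ≠ 0) :
    ∑ e ∈ g.divisors, muConv f e = f g := by
  simp only [muConv_eq]
  rw [← ArithmeticFunction.coe_zeta_mul_apply, ← mul_assoc,
    ArithmeticFunction.coe_zeta_mul_coe_moebius, one_mul]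
  simp [Faux, hg]

lemma mem_tuplesProd {k n : ℕ} (hn : n ≠ 0) {v : Fin k → ℕ} :
    v ∈ tuplesProd k n ↔ ∏ i, v i = n := by
  simp only [tuplesProd, Finset.mem_filter, Fintype.mem_piFinset, Nat.mem_divisors]
  exact ⟨fun h => h.2, fun h =>
    ⟨fun i => ⟨h ▸ Finset.dvd_prod_of_mem v (Finset.mem_univ i), hn⟩, h⟩⟩

lemma card_filter_dvd (k n e : ℕ) (hn : 0 < n) (hepos : 0 < e) :
    ((tuplesProd k n).filter fun v => ∀ i, e ∣ v i).card =
      if e ^ k ∣ n then piltz k (n / e ^ k) else 0 := by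
  have hn' : n ≠ 0 := hn.ne'
  split_ifs with hek
  · have hq : n / e ^ k ≠ 0 :=
      (Nat.div_pos (Nat.le_of_dvd hn hek) (pow_pos hepos k)).ne'
    rw [piltz]
    apply Finset.card_bij' (fun v _ => fun j => v j / e) (fun w _ => fun j => e * w j)
    · intro v hv
      rw [Finset.mem_filter] at hv
      obtain ⟨hv1, hv2⟩ := hv
      rw [mem_tuplesProd hn'] at hv1
      rw [mem_tuplesProd hq]
      have hprod : ∏ j, (e * (v j / e)) = ∏ j, v j :=
        Finset.prod_congr rfl fun j _ => Nat.mul_div_cancel' (hv2 j)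
      rw [Finset.prod_mul_distrib, Finset.prod_const, Finset.card_univ,
        Fintype.card_fin, hv1] at hprod
      exact (Nat.div_eq_of_eq_mul_right (pow_pos hepos k) hprod.symm).symm
    · intro w hw
      rw [mem_tuplesProd hq] at hw
      rw [Finset.mem_filter, mem_tuplesProd hn']
      refine ⟨?_, fun j => dvd_mul_right e (w j)⟩
      rw [Finset.prod_mul_distrib, Finset.prod_const, Finset.card_univ,
        Fintype.card_fin, hw, Nat.mul_div_cancel' hek]
    · intro v hv
      rw [Finset.mem_filter] at hv
      exact funext fun j => Nat.mul_div_cancel' (hv.2 j)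
    · intro w _
      exact funext fun j => Nat.mul_div_cancel_left (w j) hepos
  · rw [Finset.card_eq_zero, Finset.eq_empty_iff_forall_notMem]
    intro v hv
    rw [Finset.mem_filter, mem_tuplesProd hn'] at hv
    exact hek (hv.1 ▸ (by
      calc e ^ k = ∏ _j : Fin k, e := by
            rw [Finset.prod_const, Finset.card_univ, Fintype.card_fin]
        _ ∣ ∏ j, v j := Finset.prod_dvd_prod_of_dvd _ _ fun j _ => hv.2 j))

theorem gcd_convolute_eq (k : ℕ) (hk : 2 ≤ k) (f : ℕ → ℂ) (n : ℕ) (hn : 0 < n) :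
    ∑ v ∈ tuplesProd k n, f (Finset.univ.gcd v) =
      ∑ d ∈ n.divisors.filter (fun d => d ^ k ∣ n),
        muConv f d * (piltz k (n / d ^ k) : ℂ) := by
  have hn' : n ≠ 0 := hn.ne'
  have hgcd : ∀ v ∈ tuplesProd k n,
      Finset.univ.gcd v ∣ n ∧ Finset.univ.gcd v ≠ 0 := by
    intro v hv
    have hdvd : Finset.univ.gcd v ∣ n :=
      (Finset.gcd_dvd (Finset.mem_univ (⟨0, by omega⟩ : Fin k))).trans
        (((mem_tuplesProd hn').1 hv) ▸
          Finset.dvd_prod_of_mem v (Finset.mem_univ _))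
    exact ⟨hdvd, fun h => hn' (Nat.eq_zero_of_zero_dvd (h ▸ hdvd))⟩
  calc ∑ v ∈ tuplesProd k n, f (Finset.univ.gcd v)
      = ∑ v ∈ tuplesProd k n, ∑ e ∈ n.divisors,
          if e ∣ Finset.univ.gcd v then muConv f e else 0 := by
        refine Finset.sum_congr rfl fun v hv => ?_
        obtain ⟨hd, h0⟩ := hgcd v hv
        rw [← sum_muConv f _ h0, ← Finset.sum_filter]
        congr 1
        ext e
        simp only [Nat.mem_divisors, Finset.mem_filter]
        exact ⟨fun h => ⟨⟨h.1.trans hd, hn'⟩, h.1⟩, fun h => ⟨h.2, h0⟩⟩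
    _ = ∑ e ∈ n.divisors, ∑ v ∈ tuplesProd k n,
          if e ∣ Finset.univ.gcd v then muConv f e else 0 := Finset.sum_comm
    _ = ∑ e ∈ n.divisors, muConv f e *
          (((tuplesProd k n).filter fun v => ∀ i, e ∣ v i).card : ℂ) := by
        refine Finset.sum_congr rfl fun e he => ?_
        rw [← Finset.sum_filter]
        have heq : (tuplesProd k n).filter (fun v => e ∣ Finset.univ.gcd v) =
            (tuplesProd k n).filter fun v => ∀ i, e ∣ v i := by
          apply Finset.filter_congr
          intro v _
          exact ⟨fun h i => h.trans (Finset.gcd_dvd (Finset.mem_univ i)),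
            fun h => Finset.dvd_gcd fun i _ => h i⟩
        rw [heq, Finset.sum_const, nsmul_eq_mul, mul_comm]
    _ = ∑ e ∈ n.divisors, muConv f e *
          (if e ^ k ∣ n then (piltz k (n / e ^ k) : ℂ) else 0) := by
        refine Finset.sum_congr rfl fun e he => ?_
        rw [card_filter_dvd k n e hn (Nat.pos_of_mem_divisors he)]
        split_ifs <;> simp
    _ = ∑ d ∈ n.divisors.filter (fun d => d ^ k ∣ n),
          muConv f d * (piltz k (n / d ^ k) : ℂ) := by
        rw [Finset.sum_filter]
        exact Finset.sum_congr rfl fun e _ => by split_ifs <;> ring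
end
end

section
/- Let f : ℕ → ℂ with f(n) = ∑_{dδ = n} g(d) τ_k(δ), where k ≥ 1 and the series ∑ g(n)/n converges absolutely. Then (1/(x (log x)^{k-1})) ∑_{n ≤ x} f(n) tends to (1/(k-1)!) ∑_{n=1}^∞ g(n)/n as x → ∞. -/
open Finset Filter

noncomputable section

/-!
Let `T_k(x) = ∑_{n ≤ x} τ_k(n)`. The hypothesis on `f` gives `∑_{n ≤ x} f(n) = ∑_d g(d) T_k(x/d)`.
Since `τ_{k+1} = 1 * τ_k`, also `T_{k+1}(x) = ∑_{d ≤ x} T_k(x/d)`; comparing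
`∑_{d ≤ x} (x/d) log^{k-1} (x/d)` with `x ∫_1^x (log x - log t)^{k-1} dt/t = x log^k x / k`
turns `T_k(y) ~ y log^{k-1} y / (k-1)!` into the same statement for `k + 1`. Hence
`T_k(x/d) / (x log^{k-1} x) → 1/((k-1)! d)` for each `d`, and the crude bound
`T_k(y) ≤ y (1 + log y)^{k-1}` dominates these ratios by `2^{k-1}/d`, so dominated convergence
against `∑ |g(d)|/d < ∞` gives the limit.
-/

open Real Asymptotics
open scoped Nat

theorem tuplesProd_eq_finMulAntidiag (k n : ℕ) : tuplesProd k n = Nat.finMulAntidiag k n := by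
  ext v
  simp only [tuplesProd, mem_filter, Fintype.mem_piFinset, Nat.mem_divisors,
    Nat.mem_finMulAntidiag]
  constructor
  · rintro ⟨hv, rfl⟩
    refine ⟨rfl, fun h0 => ?_⟩
    obtain ⟨i, -, hi⟩ := prod_eq_zero_iff.1 h0
    simpa [hi, h0] using hv i
  · rintro ⟨rfl, hn⟩
    exact ⟨fun i => ⟨dvd_prod_of_mem v (mem_univ i), hn⟩, rfl⟩

theorem piltz_zero (n : ℕ) : piltz 0 n = if n = 1 then 1 else 0 := by
  rcases eq_or_ne n 1 with rfl | hn
  · simp [piltz, tuplesProd_eq_finMulAntidiag, Nat.finMulAntidiag_one]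
  · simp [piltz, tuplesProd_eq_finMulAntidiag, Nat.finMulAntidiag_zero_left hn, hn]

theorem piltz_succ (k n : ℕ) :
    piltz (k + 1) n = ∑ p ∈ n.divisorsAntidiagonal, piltz k p.2 := by
  simp only [piltz, tuplesProd_eq_finMulAntidiag, ← card_sigma]
  refine card_nbij' (fun v => ⟨(v 0, ∏ i, Fin.tail v i), Fin.tail v⟩)
    (fun q => Fin.cons q.1.1 q.2) (fun v hv => ?_) (fun q hq => ?_)
    (fun v _ => Fin.cons_self_tail v) (fun q hq => ?_) <;>
  simp only [mem_coe, mem_sigma, Nat.mem_divisorsAntidiagonal, Nat.mem_finMulAntidiag,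
    Fin.prod_univ_succ] at *
  · exact ⟨hv, trivial, fun h => hv.2 (hv.1 ▸ mul_eq_zero_of_right _ h)⟩
  · simp [hq.1, hq.2.1]
  · simp [Fin.tail, hq.2.1]

theorem piltz_one {n : ℕ} (hn : n ≠ 0) : piltz 1 n = 1 := by
  rw [piltz_succ, Nat.sum_divisorsAntidiagonal' fun _ e => piltz 0 e]
  simp [piltz_zero, hn]

theorem sum_Icc_sum_divisorsAntidiagonal {M : Type*} [AddCommMonoid M] (N : ℕ)
    (F : ℕ × ℕ → M) :
    ∑ n ∈ Icc 1 N, ∑ p ∈ n.divisorsAntidiagonal, F p =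
      ∑ d ∈ Icc 1 N, ∑ e ∈ Icc 1 (N / d), F (d, e) := by
  rw [sum_sigma', sum_sigma']
  refine sum_nbij' (fun q => ⟨q.2.1, q.2.2⟩) (fun q => ⟨q.1 * q.2, (q.1, q.2)⟩) ?_ ?_ ?_
    (fun _ _ => rfl) (fun _ _ => rfl)
  · rintro ⟨n, d, e⟩ h
    simp only [mem_sigma, mem_Icc, Nat.mem_divisorsAntidiagonal] at h ⊢
    obtain ⟨⟨h1, hN⟩, rfl, hn⟩ := h
    have hd : 0 < d := Nat.pos_of_ne_zero (left_ne_zero_of_mul hn)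
    have he : 0 < e := Nat.pos_of_ne_zero (right_ne_zero_of_mul hn)
    refine ⟨⟨hd, le_trans (Nat.le_mul_of_pos_right d he) hN⟩, he, ?_⟩
    rw [Nat.le_div_iff_mul_le hd, mul_comm]; exact hN
  · rintro ⟨d, e⟩ h
    simp only [mem_sigma, mem_Icc, Nat.mem_divisorsAntidiagonal] at h ⊢
    obtain ⟨⟨hd, -⟩, he, heN⟩ := h
    rw [Nat.le_div_iff_mul_le hd, mul_comm] at heN
    exact ⟨⟨Nat.mul_pos hd he, heN⟩, trivial, by positivity⟩
  · rintro ⟨n, d, e⟩ h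
    simp only [mem_sigma, Nat.mem_divisorsAntidiagonal] at h
    simp [h.2.1]

theorem AntitoneOn.abs_sum_Icc_floor_sub_integral_le {f : ℝ → ℝ} {x : ℝ} (hx : 1 ≤ x)
    (hf : AntitoneOn f (Set.Icc 1 x)) (hf0 : ∀ t ∈ Set.Icc 1 x, 0 ≤ f t) :
    |∑ d ∈ Icc 1 ⌊x⌋₊, f d - ∫ t in (1 : ℝ)..x, f t| ≤ f 1 := by
  set N := ⌊x⌋₊
  have hN : 1 ≤ N := Nat.le_floor (by exact_mod_cast hx)
  have hNx : (N : ℝ) ≤ x := Nat.floor_le (by linarith)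
  have hN1 : (1 : ℝ) ≤ N := by exact_mod_cast hN
  have hf1N : AntitoneOn f (Set.Icc 1 N) := hf.mono (Set.Icc_subset_Icc_right hNx)
  have hfNx : AntitoneOn f (Set.Icc N x) := hf.mono (Set.Icc_subset_Icc_left hN1)
  have lower_head : ∫ t in (1 : ℝ)..N, f t ≤ ∑ d ∈ Ico 1 N, f d := by
    simpa using AntitoneOn.integral_le_sum_Ico hN (by simpa using hf1N)
  have upper_head : ∑ d ∈ Ico 1 N, f ↑(d + 1) ≤ ∫ t in (1 : ℝ)..N, f t := by
    simpa using AntitoneOn.sum_le_integral_Ico hN (by simpa using hf1N)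
  have hint : IntervalIntegrable f MeasureTheory.volume N x :=
    AntitoneOn.intervalIntegrable (by rwa [Set.uIcc_of_le hNx])
  have tail_nonneg : 0 ≤ ∫ t in (N : ℝ)..x, f t :=
    intervalIntegral.integral_nonneg hNx fun t ht => hf0 t ⟨hN1.trans ht.1, ht.2⟩
  have tail_le : ∫ t in (N : ℝ)..x, f t ≤ f N := calc
    ∫ t in (N : ℝ)..x, f t ≤ ∫ _ in (N : ℝ)..x, f N :=
      intervalIntegral.integral_mono_on hNx hint intervalIntegrable_const
        fun t ht => hfNx ⟨le_rfl, hNx⟩ ht ht.1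
    _ = f N * (x - N) := by simp [mul_comm]
    _ ≤ f N :=
      mul_le_of_le_one_right (hf0 N ⟨hN1, hNx⟩) (by linarith [Nat.lt_floor_add_one x])
  have hsum_top : ∑ d ∈ Icc 1 N, f d = ∑ d ∈ Ico 1 N, f d + f N := by
    rw [Icc_eq_cons_Ico hN, sum_cons, add_comm]
  have hsum_bot : ∑ d ∈ Icc 1 N, f d = f 1 + ∑ d ∈ Ico 1 N, f ↑(d + 1) := by
    rw [← Ico_add_one_right_eq_Icc, sum_eq_sum_Ico_succ_bot (by omega), ← sum_Ico_add' (c := 1)]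
    simp
  rw [← intervalIntegral.integral_add_adjacent_intervals
    (AntitoneOn.intervalIntegrable (by rwa [Set.uIcc_of_le hN1])) hint, abs_le]
  constructor <;> linarith [hf0 1 ⟨le_rfl, hx⟩]

theorem antitoneOn_log_sub_log_pow_div (x : ℝ) (m : ℕ) :
    AntitoneOn (fun t => (log x - log t) ^ m / t) (Set.Icc 1 x) := by
  intro a ha b hb hab
  have ha0 : 0 < a := by linarith [ha.1]
  have hlog : log a ≤ log b := log_le_log ha0 hab
  have hb0 : 0 ≤ log x - log b := sub_nonneg.2 (log_le_log (by linarith [hb.1]) hb.2)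
  exact div_le_div₀ (pow_nonneg (by linarith) m) (pow_le_pow_left₀ hb0 (by linarith) m) ha0 hab

theorem integral_log_sub_log_pow_div {x : ℝ} (hx : 1 ≤ x) (m : ℕ) :
    ∫ t in (1 : ℝ)..x, (log x - log t) ^ m / t = log x ^ (m + 1) / (m + 1) := by
  have hderiv : ∀ t ∈ Set.uIcc 1 x,
      HasDerivAt (fun s => -(log x - log s) ^ (m + 1) / (m + 1)) ((log x - log t) ^ m / t) t := by
    intro t ht
    have ht0 : t ≠ 0 := by rw [Set.uIcc_of_le hx] at ht; linarith [ht.1]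
    refine ((((hasDerivAt_log ht0).const_sub (log x)).fun_pow (m + 1)).fun_neg.div_const
      ((m : ℝ) + 1)).congr_deriv ?_
    push_cast
    field_simp
  have hint : IntervalIntegrable (fun t => (log x - log t) ^ m / t) MeasureTheory.volume 1 x :=
    AntitoneOn.intervalIntegrable
      (by rw [Set.uIcc_of_le hx]; exact antitoneOn_log_sub_log_pow_div x m)
  rw [intervalIntegral.integral_eq_sub_of_hasDerivAt hderiv hint]
  simp [neg_div]

theorem isLittleO_mul_log_pow {i j : ℕ} (hij : i < j) :
    (fun x => x * log x ^ i) =o[atTop] fun x => x * log x ^ j := by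
  have hlog : (fun _ => (1 : ℝ)) =o[atTop] fun x => log x ^ (j - i) :=
    (isLittleO_one_left_iff ℝ).2 <| tendsto_norm_atTop_atTop.comp <|
      (tendsto_pow_atTop (by omega)).comp tendsto_log_atTop
  refine ((isBigO_refl (fun x => x * log x ^ i) atTop).mul_isLittleO hlog).congr
    (fun x => mul_one _) fun x => ?_
  rw [mul_assoc, ← pow_add, Nat.add_sub_cancel' hij.le]

theorem isLittleO_mul_log_pow_div {i j : ℕ} (hij : i < j) :
    (fun x => x * log x ^ i) =o[atTop] fun x => x * log x ^ j / (j : ℝ) :=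
  (isLittleO_mul_log_pow hij).trans_isBigO <|
    (isBigO_const_mul_self (j : ℝ) (fun x => x * log x ^ j / (j : ℝ)) atTop).congr_left
      fun x => by field_simp [show (j : ℝ) ≠ 0 by exact_mod_cast (by omega : j ≠ 0)]

-- If `h` sums `a` over `[1, x]`, then `convSum h` sums the Dirichlet convolution `1 * a`.
def convSum (h : ℝ → ℝ) (x : ℝ) : ℝ := ∑ d ∈ Icc 1 ⌊x⌋₊, h (x / d)

theorem one_le_div_of_mem_Icc_floor {x : ℝ} {d : ℕ} (hd : d ∈ Icc 1 ⌊x⌋₊) : 1 ≤ x / d := by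
  obtain ⟨h1, hdx⟩ := mem_Icc.1 hd
  rw [one_le_div (by exact_mod_cast h1)]
  exact (Nat.le_floor_iff' (by omega)).1 hdx

theorem convSum_nonneg {w : ℝ → ℝ} (hw : ∀ y, 1 ≤ y → 0 ≤ w y) (x : ℝ) : 0 ≤ convSum w x :=
  sum_nonneg fun _ hd => hw _ (one_le_div_of_mem_Icc_floor hd)

theorem convSum_sub_const_mul (h w : ℝ → ℝ) (c x : ℝ) :
    convSum h x - c * convSum w x = convSum (fun y => h y - c * w y) x := by
  simp only [convSum, mul_sum, sum_sub_distrib]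

theorem convSum_mul_log_pow_isEquivalent (m : ℕ) :
    convSum (fun y => y * log y ^ m) ~[atTop] fun x => x * log x ^ (m + 1) / (m + 1) := by
  have hbound : ∀ x, 1 ≤ x →
      |convSum (fun y => y * log y ^ m) x - x * log x ^ (m + 1) / (m + 1)| ≤ x * log x ^ m := by
    intro x hx
    have hcompare := (antitoneOn_log_sub_log_pow_div x m).abs_sum_Icc_floor_sub_integral_le hx
      fun t ht => div_nonneg (pow_nonneg (sub_nonneg.2 (log_le_log (by linarith [ht.1]) ht.2)) m)
        (by linarith [ht.1])
    rw [integral_log_sub_log_pow_div hx] at hcompare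
    have hconv : convSum (fun y => y * log y ^ m) x
        = x * ∑ d ∈ Icc 1 ⌊x⌋₊, (log x - log d) ^ m / d := by
      rw [convSum, mul_sum]
      refine sum_congr rfl fun d hd => ?_
      have hd0 : (d : ℝ) ≠ 0 := by have := (mem_Icc.1 hd).1; positivity
      rw [log_div (by linarith) hd0]
      ring
    rw [hconv, mul_div_assoc, ← mul_sub, abs_mul, abs_of_nonneg (by linarith)]
    simpa using mul_le_mul_of_nonneg_left hcompare (by linarith : (0 : ℝ) ≤ x)
  refine IsBigO.trans_isLittleO (g := fun x => x * log x ^ m) ?_ ?_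
  · refine IsBigO.of_bound 1 ?_
    filter_upwards [eventually_ge_atTop 1] with x hx
    have hpos : 0 ≤ x * log x ^ m := mul_nonneg (by linarith) (pow_nonneg (log_nonneg hx) m)
    rw [norm_eq_abs, norm_eq_abs, abs_of_nonneg hpos, one_mul]
    exact hbound x hx
  · exact_mod_cast isLittleO_mul_log_pow_div m.lt_succ_self

theorem convSum_isLittleO {r w : ℝ → ℝ} (hw : ∀ y, 1 ≤ y → 0 ≤ w y) (hr : r =o[atTop] w)
    (hr_bdd : ∀ Y, ∃ K, ∀ y ∈ Set.Icc 1 Y, |r y| ≤ K)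
    (hw_large : (fun x => x) =o[atTop] convSum w) :
    convSum r =o[atTop] convSum w := by
  -- Beyond some `Y`, `|r| ≤ (ε/2) w`; on `[1, Y]`, `|r| ≤ K`, and these terms cost only `K x`.
  refine IsLittleO.of_bound fun ε hε => ?_
  obtain ⟨Y, hY⟩ := eventually_atTop.1 (hr.bound (half_pos hε))
  obtain ⟨K, hK⟩ := hr_bdd Y
  have hr_le : ∀ y, 1 ≤ y → |r y| ≤ ε / 2 * w y + |K| := by
    intro y hy
    have hεw : 0 ≤ ε / 2 * w y := mul_nonneg (by linarith) (hw y hy)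
    rcases le_total Y y with hYy | hyY
    · have := hY y hYy
      rw [norm_eq_abs, norm_eq_abs, abs_of_nonneg (hw y hy)] at this
      linarith [abs_nonneg K]
    · linarith [hK y ⟨hy, hyY⟩, le_abs_self K]
  filter_upwards [(hw_large.const_mul_left |K|).bound (half_pos hε), eventually_ge_atTop 1]
    with x hKx hx
  have hw0 := convSum_nonneg hw x
  rw [norm_mul, norm_eq_abs, norm_eq_abs, norm_eq_abs, abs_abs,
    abs_of_nonneg (by linarith : (0 : ℝ) ≤ x), abs_of_nonneg hw0] at hKx
  rw [norm_eq_abs, norm_eq_abs, abs_of_nonneg hw0]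
  have hfloor : (⌊x⌋₊ : ℝ) ≤ x := Nat.floor_le (by linarith)
  calc |convSum r x| ≤ ∑ d ∈ Icc 1 ⌊x⌋₊, |r (x / d)| := abs_sum_le_sum_abs _ _
    _ ≤ ∑ d ∈ Icc 1 ⌊x⌋₊, (ε / 2 * w (x / d) + |K|) :=
      sum_le_sum fun d hd => hr_le _ (one_le_div_of_mem_Icc_floor hd)
    _ = ε / 2 * convSum w x + ⌊x⌋₊ * |K| := by simp [convSum, sum_add_distrib, mul_sum]
    _ ≤ ε * convSum w x := by nlinarith [abs_nonneg K]

theorem convSum_isEquivalent {h : ℝ → ℝ} {c : ℝ} (hc : c ≠ 0) (m : ℕ)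
    (hh : h ~[atTop] fun y => c * (y * log y ^ m))
    (hh_bdd : ∀ Y, ∃ K, ∀ y ∈ Set.Icc 1 Y, |h y| ≤ K) :
    convSum h ~[atTop] fun x => c * (x * log x ^ (m + 1) / (m + 1)) := by
  have hw : ∀ y : ℝ, 1 ≤ y → 0 ≤ y * log y ^ m := fun y hy =>
    mul_nonneg (by linarith) (pow_nonneg (log_nonneg hy) m)
  have hA := convSum_mul_log_pow_isEquivalent m
  have hr : (fun y => h y - c * (y * log y ^ m)) =o[atTop] fun y => y * log y ^ m :=
    hh.isLittleO.trans_isBigO (isBigO_const_mul_self c _ _)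
  have hr_bdd : ∀ Y, ∃ K, ∀ y ∈ Set.Icc 1 Y, |h y - c * (y * log y ^ m)| ≤ K := by
    intro Y
    obtain ⟨K, hK⟩ := hh_bdd Y
    refine ⟨K + |c| * (Y * log Y ^ m), fun y hy => ?_⟩
    have hwY : y * log y ^ m ≤ Y * log Y ^ m :=
      mul_le_mul hy.2 (pow_le_pow_left₀ (log_nonneg hy.1) (log_le_log (by linarith [hy.1]) hy.2) m)
        (pow_nonneg (log_nonneg hy.1) m) (by linarith [hy.1, hy.2])
    calc |h y - c * (y * log y ^ m)| ≤ |h y| + |c| * (y * log y ^ m) := by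
          simpa [abs_mul, abs_of_nonneg (hw y hy.1)] using abs_sub (h y) (c * (y * log y ^ m))
      _ ≤ K + |c| * (Y * log Y ^ m) := by gcongr; exact hK y hy
  have hx_small : (fun x => x) =o[atTop] convSum fun y => y * log y ^ m := by
    refine IsLittleO.trans_isEquivalent ?_ hA.symm
    simpa using (isLittleO_mul_log_pow_div (i := 0) (j := m + 1) (by omega))
  have hdiff := convSum_isLittleO hw hr hr_bdd hx_small
  refine IsEquivalent.trans (v := fun x => c * convSum (fun y => y * log y ^ m) x) ?_
    ((IsEquivalent.refl (u := fun _ => c)).mul hA)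
  refine IsLittleO.isEquivalent ((isLittleO_const_mul_right_iff hc).2 ?_)
  exact hdiff.congr (fun x => (convSum_sub_const_mul _ _ c x).symm) fun _ => rfl

def piltzSum (k : ℕ) (x : ℝ) : ℝ := ∑ n ∈ Icc 1 ⌊x⌋₊, (piltz k n : ℝ)

theorem piltzSum_nonneg (k : ℕ) (x : ℝ) : 0 ≤ piltzSum k x :=
  sum_nonneg fun _ _ => Nat.cast_nonneg _

theorem piltzSum_one (x : ℝ) : piltzSum 1 x = ⌊x⌋₊ := by
  rw [piltzSum, sum_congr rfl fun n hn => by rw [piltz_one (by grind)]]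
  simp

theorem piltzSum_succ (k : ℕ) (x : ℝ) : piltzSum (k + 1) x = convSum (piltzSum k) x := by
  simp only [piltzSum, piltz_succ, Nat.cast_sum]
  rw [sum_Icc_sum_divisorsAntidiagonal _ fun p => (piltz k p.2 : ℝ), convSum]
  simp only [piltzSum, Nat.floor_div_natCast]

theorem sum_Icc_floor_inv_le {x y : ℝ} (hyx : y ≤ x) (hx : 1 ≤ x) :
    ∑ d ∈ Icc 1 ⌊y⌋₊, (d : ℝ)⁻¹ ≤ 1 + log x := calc
  ∑ d ∈ Icc 1 ⌊y⌋₊, (d : ℝ)⁻¹ ≤ ∑ d ∈ Icc 1 ⌊x⌋₊, (d : ℝ)⁻¹ :=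
    sum_le_sum_of_subset_of_nonneg (Icc_subset_Icc_right (Nat.floor_le_floor hyx))
      fun _ _ _ => by positivity
  _ ≤ 1 + log ⌊x⌋₊ := by simpa [harmonic_eq_sum_Icc] using harmonic_le_one_add_log ⌊x⌋₊
  _ ≤ 1 + log x := by
    gcongr
    · exact_mod_cast Nat.floor_pos.2 hx
    · exact Nat.floor_le (by linarith)

theorem piltzSum_le {x y : ℝ} (hy : 0 ≤ y) (hyx : y ≤ x) (hx : 1 ≤ x) (k : ℕ) :
    piltzSum (k + 1) y ≤ y * (1 + log x) ^ k := by
  induction k generalizing y with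
  | zero => simpa [piltzSum_one] using Nat.floor_le hy
  | succ k ih =>
    have hlog : 0 ≤ 1 + log x := by linarith [log_nonneg hx]
    calc piltzSum (k + 2) y = ∑ d ∈ Icc 1 ⌊y⌋₊, piltzSum (k + 1) (y / d) := piltzSum_succ _ _
      _ ≤ ∑ d ∈ Icc 1 ⌊y⌋₊, y / d * (1 + log x) ^ k := by
        refine sum_le_sum fun d hd => ih (by positivity) ?_
        exact (div_le_self hy (by exact_mod_cast (mem_Icc.1 hd).1)).trans hyx
      _ = y * (1 + log x) ^ k * ∑ d ∈ Icc 1 ⌊y⌋₊, (d : ℝ)⁻¹ := by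
        rw [mul_sum]; exact sum_congr rfl fun _ _ => by ring
      _ ≤ y * (1 + log x) ^ k * (1 + log x) := by
        gcongr; exact sum_Icc_floor_inv_le hyx hx
      _ = y * (1 + log x) ^ (k + 1) := by ring

theorem piltzSum_isEquivalent (k : ℕ) :
    piltzSum (k + 1) ~[atTop] fun x => x * log x ^ k / k ! := by
  induction k with
  | zero =>
    simpa [funext piltzSum_one] using isEquivalent_nat_floor
  | succ k ih =>
    have hc : (1 / k ! : ℝ) ≠ 0 := by positivity
    have hh : piltzSum (k + 1) ~[atTop] fun y => 1 / k ! * (y * log y ^ k) :=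
      ih.congr_right (Eventually.of_forall fun y => by ring)
    have hbdd : ∀ Y, ∃ K, ∀ y ∈ Set.Icc 1 Y, |piltzSum (k + 1) y| ≤ K := fun Y =>
      ⟨Y * (1 + log Y) ^ k, fun y hy => by
        rw [abs_of_nonneg (piltzSum_nonneg _ _)]
        exact (piltzSum_le (by linarith [hy.1]) hy.2 (hy.1.trans hy.2) k).trans
          (mul_le_mul_of_nonneg_right hy.2
            (pow_nonneg (by linarith [log_nonneg (hy.1.trans hy.2)]) k))⟩
    refine ((convSum_isEquivalent hc k hh hbdd).congr_left
      (Eventually.of_forall fun x => (piltzSum_succ _ x).symm)).congr_right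
      (Eventually.of_forall fun x => ?_)
    rw [Nat.factorial_succ]
    push_cast
    field_simp

theorem tendsto_piltzSum_div_mul_log_pow (m d : ℕ) :
    Tendsto (fun x => piltzSum (m + 1) (x / d) / (x * log x ^ m)) atTop
      (nhds (1 / (m ! * d))) := by
  rcases eq_or_ne d 0 with rfl | hd
  · simp [piltzSum]
  have hd0 : (0 : ℝ) < d := by positivity
  have hlog : (fun x => log (x / d)) ~[atTop] log := by
    refine (IsEquivalent.refl.sub_isLittleO (isLittleO_const_log_atTop (c := log d))).congr_left ?_
    filter_upwards [eventually_gt_atTop 0] with x hx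
    simp [log_div hx.ne' hd0.ne']
  have hT : (fun x => piltzSum (m + 1) (x / d)) ~[atTop] fun x => x * log x ^ m / (m ! * d) := by
    refine ((piltzSum_isEquivalent m).comp_tendsto (tendsto_id.atTop_div_const hd0)).trans ?_
    refine (((IsEquivalent.refl (u := fun x : ℝ => x / d / m !)).mul (hlog.pow m))).congr_left
      (Eventually.of_forall fun x => ?_) |>.congr_right (Eventually.of_forall fun x => ?_)
    · simp only [Function.comp_apply, id, Pi.mul_apply, Pi.pow_apply]
      ring
    · simp only [Pi.mul_apply, Pi.pow_apply]
      ring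
  refine (hT.div IsEquivalent.refl).symm.tendsto_nhds (tendsto_const_nhds.congr' ?_)
  filter_upwards [eventually_gt_atTop 1] with x hx
  have := log_pos hx
  simp only [Pi.div_apply]
  field_simp

theorem piltzSum_div_div_mul_log_pow_le {x : ℝ} (hx : exp 1 ≤ x) (m d : ℕ) :
    piltzSum (m + 1) (x / d) / (x * log x ^ m) ≤ 2 ^ m / d := by
  have hx1 : 1 ≤ x := (one_le_exp zero_le_one).trans hx
  have hlog : 1 ≤ log x := (le_log_iff_exp_le (by linarith)).2 hx
  rcases eq_or_ne d 0 with rfl | hd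
  · simp [piltzSum]
  have hd0 : (0 : ℝ) < d := by positivity
  have hxd : x / d ≤ x := div_le_self (by linarith) (by exact_mod_cast Nat.one_le_iff_ne_zero.2 hd)
  rw [div_le_div_iff₀ (by positivity) hd0]
  calc piltzSum (m + 1) (x / d) * d ≤ x / d * (1 + log x) ^ m * d := by
        gcongr; exact piltzSum_le (by positivity) hxd hx1 m
    _ ≤ x / d * (2 * log x) ^ m * d := by gcongr; linarith
    _ = 2 ^ m * (x * log x ^ m) := by field_simp; ring

theorem norm_mul_piltzSum_div_le {x : ℝ} (hx : exp 1 ≤ x) (m d : ℕ) (a : ℂ) :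
    ‖a * ((piltzSum (m + 1) (x / d) / (x * log x ^ m) : ℝ) : ℂ)‖ ≤ 2 ^ m * (‖a‖ / d) := by
  have hx1 : 1 ≤ x := (one_le_exp zero_le_one).trans hx
  have hratio : 0 ≤ piltzSum (m + 1) (x / d) / (x * log x ^ m) :=
    div_nonneg (piltzSum_nonneg _ _) (mul_nonneg (by linarith) (pow_nonneg (log_nonneg hx1) m))
  rw [norm_mul, Complex.norm_real, norm_of_nonneg hratio]
  calc ‖a‖ * _ ≤ ‖a‖ * (2 ^ m / d) :=
        mul_le_mul_of_nonneg_left (piltzSum_div_div_mul_log_pow_le hx m d) (norm_nonneg a)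
    _ = 2 ^ m * (‖a‖ / d) := by ring

theorem sum_Icc_floor_sum_divisorsAntidiagonal_eq_tsum (k : ℕ) (g : ℕ → ℂ) (x : ℝ) :
    ∑ n ∈ Icc 1 ⌊x⌋₊, ∑ p ∈ n.divisorsAntidiagonal, g p.1 * (piltz k p.2 : ℂ) =
      ∑' d, g d * (piltzSum k (x / d) : ℂ) := by
  have hvanish : ∀ d ∉ Icc 1 ⌊x⌋₊, g d * (piltzSum k (x / d) : ℂ) = 0 := by
    intro d hd
    have : ⌊x⌋₊ / d = 0 := Nat.div_eq_zero_iff.2 (by grind)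
    simp [piltzSum, Nat.floor_div_natCast, this]
  rw [tsum_eq_sum hvanish, sum_Icc_sum_divisorsAntidiagonal _ fun p => g p.1 * (piltz k p.2 : ℂ)]
  refine sum_congr rfl fun d _ => ?_
  simp [piltzSum, Nat.floor_div_natCast, mul_sum]

theorem cohen_mean_value (k : ℕ) (hk : 1 ≤ k) (f g : ℕ → ℂ)
    (hfg : ∀ n : ℕ, 0 < n →
      f n = ∑ p ∈ n.divisorsAntidiagonal, g p.1 * (piltz k p.2 : ℂ))
    (hg : Summable fun n : ℕ => ‖g n‖ / n) :
    Tendsto (fun x : ℝ =>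
        (∑ n ∈ Finset.Icc 1 ⌊x⌋₊, f n) / ((x * Real.log x ^ (k - 1) : ℝ) : ℂ))
      atTop
      (nhds ((1 / (Nat.factorial (k - 1) : ℂ)) * ∑' n : ℕ, g n / (n : ℂ))) := by
  obtain ⟨m, rfl⟩ : ∃ m, k = m + 1 := ⟨k - 1, by omega⟩
  rw [Nat.add_sub_cancel]
  set ratio : ℝ → ℕ → ℝ := fun x d => piltzSum (m + 1) (x / d) / (x * log x ^ m)
  have hsum : ∀ x : ℝ, (∑ n ∈ Icc 1 ⌊x⌋₊, f n) / ((x * log x ^ m : ℝ) : ℂ) =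
      ∑' d, g d * (ratio x d : ℂ) := fun x => by
    rw [sum_congr rfl fun n hn => hfg n (mem_Icc.1 hn).1,
      sum_Icc_floor_sum_divisorsAntidiagonal_eq_tsum, ← tsum_div_const]
    simp only [ratio, Complex.ofReal_div, mul_div_assoc]
  have hlim : ∀ d, Tendsto (fun x => g d * (ratio x d : ℂ)) atTop
      (nhds (1 / (m ! : ℂ) * (g d / d))) := fun d => by
    rw [show 1 / (m ! : ℂ) * (g d / d) = g d * ((1 / (m ! * d) : ℝ) : ℂ) by push_cast; ring]
    exact ((Complex.continuous_ofReal.tendsto _).comp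
      (tendsto_piltzSum_div_mul_log_pow m d)).const_mul (g d)
  have hdom : ∀ᶠ x in atTop, ∀ d, ‖g d * (ratio x d : ℂ)‖ ≤ 2 ^ m * (‖g d‖ / d) :=
    (eventually_ge_atTop (exp 1)).mono fun x hx d => norm_mul_piltzSum_div_le hx m d (g d)
  have h := tendsto_tsum_of_dominated_convergence (hg.mul_left (2 ^ m)) hlim hdom
  rw [tsum_mul_left] at h
  exact h.congr fun x => (hsum x).symm
end
end

section
/- For k ≥ 2, ∑_{n₁,…,n_k = 1}^∞ (μ*F)(n₁,…,n_k)/(n₁⋯n_k) with F(n₁,…,n_k) = f(gcd(n₁,…,n_k)) equals (1/ζ(k)) ∑_{m=1}^∞ f(m)/m^k, provided ∑ |f(m)|/m^k < ∞. -/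
open Finset Filter

noncomputable section

/-- The `k`-variable Möbius inversion `μ * F` (Dirichlet convolution in `k` variables
with the `k`-variable Möbius function `μ(n₁)⋯μ(n_k)`). -/
def mconv (k : ℕ) (F : (Fin k → ℕ) → ℂ) (n : Fin k → ℕ) : ℂ :=
  ∑ d ∈ Fintype.piFinset (fun i => (n i).divisors),
    (∏ i, ((ArithmeticFunction.moebius ((n i) / (d i)) : ℤ) : ℂ)) * F d

/-!
Möbius inversion writes `f = 1 * g` with `g = μ * f`, so `f (gcd d) = ∑_{m ∣ gcd d} g m` is a
combination of products `∏ i, [m ∣ dᵢ]`. The `k`-variable Möbius inversion factors over such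
products, and in one variable it sends the indicator of the multiples of `m` to the indicator of
`{m}`. Hence `(μ * F)(n) = g m` if `n = (m, …, m)` and `0` otherwise, and the series collapses to
`∑ g m / m ^ k = L(μ, k) L(f, k) = L(f, k) / ζ(k)`.
-/

open ArithmeticFunction
open scoped ArithmeticFunction.Moebius LSeries.notation

theorem Nat.sum_divisors_moebius_eq_ite {R : Type*} [Ring R] (n : ℕ) :
    ∑ d ∈ n.divisors, (μ d : R) = if n = 1 then 1 else 0 := by
  have h := congr($(coe_moebius_mul_coe_zeta (R := R)) n)
  rw [coe_mul_zeta_apply, one_apply] at h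
  simpa using h

theorem Nat.sum_divisors_moebius_div_mul_ite_dvd {R : Type*} [Ring R] {m n : ℕ}
    (hn : n ≠ 0) :
    ∑ e ∈ n.divisors, (μ (n / e) : R) * (if m ∣ e then 1 else 0) =
      if n = m then 1 else 0 := by
  simp_rw [mul_ite, mul_one, mul_zero, ← Finset.sum_filter]
  by_cases hmn : m ∣ n
  · obtain ⟨c, rfl⟩ := hmn
    have hm : m ≠ 0 := left_ne_zero_of_mul hn
    have hmultiples : ({e ∈ (m * c).divisors | m ∣ e} : Finset ℕ) =
        c.divisors.map ⟨(m * ·), mul_right_injective₀ hm⟩ := by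
      ext e
      simp only [Finset.mem_filter, Nat.mem_divisors, Finset.mem_map, Function.Embedding.coeFn_mk]
      constructor
      · rintro ⟨⟨he, -⟩, t, rfl⟩
        exact ⟨t, ⟨(Nat.mul_dvd_mul_iff_left (Nat.pos_of_ne_zero hm)).mp he,
          right_ne_zero_of_mul hn⟩, rfl⟩
      · rintro ⟨t, ⟨ht, -⟩, rfl⟩
        exact ⟨⟨Nat.mul_dvd_mul_left m ht, hn⟩, dvd_mul_right m t⟩
    rw [hmultiples, Finset.sum_map]
    simp only [Function.Embedding.coeFn_mk, Nat.mul_div_mul_left _ _ (Nat.pos_of_ne_zero hm)]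
    rw [Nat.sum_div_divisors c (fun d => (μ d : R)), Nat.sum_divisors_moebius_eq_ite]
    simp [Nat.mul_eq_left hm]
  · rw [Finset.sum_eq_zero, if_neg (by rintro rfl; exact hmn dvd_rfl)]
    intro e he
    obtain ⟨he, hme⟩ := Finset.mem_filter.mp he
    exact absurd (hme.trans (Nat.dvd_of_mem_divisors he)) hmn

section

variable {k : ℕ}

theorem mconv_congr {F G : (Fin k → ℕ) → ℂ} {v : Fin k → ℕ}
    (h : ∀ d ∈ Fintype.piFinset (fun i => (v i).divisors), F d = G d) :
    mconv k F v = mconv k G v :=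
  Finset.sum_congr rfl fun d hd => by rw [h d hd]

theorem mconv_sum {ι : Type*} (s : Finset ι) (F : ι → (Fin k → ℕ) → ℂ)
    (v : Fin k → ℕ) :
    mconv k (fun d => ∑ j ∈ s, F j d) v = ∑ j ∈ s, mconv k (F j) v := by
  simp only [mconv, Finset.mul_sum]
  exact Finset.sum_comm

theorem mconv_const_mul (c : ℂ) (F : (Fin k → ℕ) → ℂ) (v : Fin k → ℕ) :
    mconv k (fun d => c * F d) v = c * mconv k F v := by
  simp only [mconv, Finset.mul_sum, mul_left_comm c]

theorem mconv_prod (h : Fin k → ℕ → ℂ) (v : Fin k → ℕ) :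
    mconv k (fun d => ∏ i, h i (d i)) v =
      ∏ i, ∑ e ∈ (v i).divisors, (μ (v i / e) : ℂ) * h i e := by
  rw [Finset.prod_univ_sum]
  simp only [mconv, Finset.prod_mul_distrib]

variable [NeZero k] {f g : ℕ → ℂ}

theorem mconv_comp_gcd (hfg : ∀ n ≠ 0, ∑ m ∈ n.divisors, g m = f n) {v : Fin k → ℕ}
    (hv : ∀ i, v i ≠ 0) :
    mconv k (fun d => f (univ.gcd d)) v =
      ∑ m ∈ (univ.gcd v).divisors, if v = (fun _ => m) then g m else 0 := by
  have hgcd_ne_zero {d : Fin k → ℕ} (hd : ∀ i, d i ≠ 0) : univ.gcd d ≠ 0 :=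
    fun h => hd 0 (Finset.gcd_eq_zero_iff.mp h 0 (mem_univ 0))
  have hexpand : ∀ d ∈ Fintype.piFinset (fun i => (v i).divisors),
      f (univ.gcd d) =
        ∑ m ∈ (univ.gcd v).divisors, g m * ∏ i, if m ∣ d i then 1 else 0 := by
    intro d hd
    have hdv (i : Fin k) : d i ∣ v i ∧ v i ≠ 0 :=
      Nat.mem_divisors.mp (Fintype.mem_piFinset.mp hd i)
    have hd0 (i : Fin k) : d i ≠ 0 := ne_zero_of_dvd_ne_zero (hdv i).2 (hdv i).1
    rw [← hfg _ (hgcd_ne_zero hd0), ← Nat.divisors_filter_dvd_of_dvd (hgcd_ne_zero hv)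
      (Finset.gcd_mono_fun fun i _ => (hdv i).1), Finset.sum_filter]
    simp only [Finset.prod_boole, Finset.dvd_gcd_iff, mem_univ, true_imp_iff, mul_ite, mul_one,
      mul_zero]
  rw [mconv_congr hexpand, mconv_sum]
  refine Finset.sum_congr rfl fun m _ => ?_
  rw [mconv_const_mul, mconv_prod fun _ e => if m ∣ e then 1 else 0,
    Finset.prod_congr rfl fun i _ => Nat.sum_divisors_moebius_div_mul_ite_dvd (hv i),
    Finset.prod_boole, mul_ite, mul_one, mul_zero]
  simp only [mem_univ, true_imp_iff, funext_iff]

theorem mconv_comp_gcd_const (hfg : ∀ n ≠ 0, ∑ m ∈ n.divisors, g m = f n) {m : ℕ}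
    (hm : m ≠ 0) :
    mconv k (fun d => f (univ.gcd d)) (fun _ => m) = g m := by
  have hmem : m ∈ (univ.gcd fun _ : Fin k => m).divisors :=
    Nat.mem_divisors.mpr ⟨Finset.dvd_gcd fun _ _ => dvd_rfl, fun h =>
      hm (Finset.gcd_eq_zero_iff.mp h 0 (mem_univ 0))⟩
  rw [mconv_comp_gcd hfg fun _ => hm]
  simp only [funext_iff, forall_const]
  rw [Finset.sum_ite_eq, if_pos hmem]

theorem mconv_comp_gcd_eq_zero (hfg : ∀ n ≠ 0, ∑ m ∈ n.divisors, g m = f n)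
    {v : Fin k → ℕ} (hv : ∀ m, v ≠ fun _ => m) :
    mconv k (fun d => f (univ.gcd d)) v = 0 := by
  by_cases hv0 : ∃ i, v i = 0
  · obtain ⟨i, hi⟩ := hv0
    refine Finset.sum_eq_zero fun d hd => ?_
    simpa [hi] using Fintype.mem_piFinset.mp hd i
  · rw [mconv_comp_gcd hfg (not_exists.mp hv0)]
    exact Finset.sum_eq_zero fun m _ => if_neg (hv m)

theorem tsum_mconv_comp_gcd_div_prod (hfg : ∀ n ≠ 0, ∑ m ∈ n.divisors, g m = f n) :
    ∑' v : Fin k → ℕ, mconv k (fun d => f (univ.gcd d)) v / ∏ i, (v i : ℂ) =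
      LSeries g k := by
  rw [LSeries, ← (Function.const_injective (α := Fin k)).tsum_eq]
  · refine tsum_congr fun m => ?_
    show mconv k _ (fun _ => m) / ∏ _ : Fin k, (m : ℂ) = _
    rcases eq_or_ne m 0 with rfl | hm
    · simp [NeZero.ne k]
    · rw [mconv_comp_gcd_const hfg hm, prod_const, card_univ, Fintype.card_fin,
        LSeries.term_of_ne_zero hm, Complex.cpow_natCast]
  · intro v hv
    by_contra hconst
    refine hv ?_
    dsimp only
    rw [mconv_comp_gcd_eq_zero hfg fun m h => hconst ⟨m, h.symm⟩, zero_div]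

end

theorem sum_divisors_moebius_convolution (f : ℕ → ℂ) {n : ℕ} (hn : n ≠ 0) :
    ∑ m ∈ n.divisors, (↗μ ⍟ f) m = f n :=
  sum_eq_iff_sum_mul_moebius_eq.mpr (fun n _ => by simp [LSeries.convolution_def]) n
    (Nat.pos_of_ne_zero hn)

theorem LSeries_natCast_eq_tsum (f : ℕ → ℂ) {k : ℕ} (hk : k ≠ 0) :
    LSeries f k = ∑' n : ℕ, f n / (n : ℂ) ^ k := by
  simp only [LSeries, LSeries.term_of_ne_zero' (Nat.cast_ne_zero.mpr hk), Complex.cpow_natCast]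

theorem LSeriesSummable_natCast_of_summable {f : ℕ → ℂ} {k : ℕ} (hk : k ≠ 0)
    (hf : Summable fun n : ℕ => ‖f n‖ / (n : ℝ) ^ k) : LSeriesSummable f k :=
  hf.of_norm_bounded fun n => by
    rw [LSeries.term_of_ne_zero' (Nat.cast_ne_zero.mpr hk), Complex.cpow_natCast, norm_div,
      norm_pow, Complex.norm_natCast]

theorem LSeries_moebius_eq_one_div_riemannZeta {s : ℂ} (hs : 1 < s.re) :
    L ↗μ s = 1 / riemannZeta s :=
  eq_one_div_of_mul_eq_one_right <|
    LSeries_zeta_eq_riemannZeta hs ▸ LSeries_zeta_mul_Lseries_moebius hs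

theorem series_mconv_gcd (k : ℕ) (hk : 2 ≤ k) (f : ℕ → ℂ)
    (hf : Summable fun m : ℕ => ‖f m‖ / (m : ℝ) ^ k) :
    ∑' v : Fin k → ℕ, mconv k (fun w => f (Finset.univ.gcd w)) v / ∏ i, (v i : ℂ) =
      (1 / riemannZeta k) * ∑' m : ℕ, f m / (m : ℂ) ^ k := by
  have : NeZero k := ⟨by omega⟩
  have hs : 1 < (k : ℂ).re := by
    rw [Complex.natCast_re]
    exact_mod_cast hk
  rw [tsum_mconv_comp_gcd_div_prod fun n hn => sum_divisors_moebius_convolution f hn,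
    LSeries_convolution' (LSeriesSummable_moebius_iff.mpr hs)
      (LSeriesSummable_natCast_of_summable (NeZero.ne k) hf),
    LSeries_moebius_eq_one_div_riemannZeta hs, LSeries_natCast_eq_tsum f (NeZero.ne k)]
end
end

section
/- For every k ≥ 2 and n ≥ 1, ∑_{n₁⋯n_k = n} log(gcd(n₁,…,n_k)) = ∑_{d^k δ = n} Λ(d) τ_k(δ), where Λ is the von Mangoldt function. -/
open Finset Filter

noncomputable section

theorem sum_log_gcd (k n : ℕ) (hk : 2 ≤ k) (hn : 1 ≤ n) :
    ∑ v ∈ tuplesProd k n, Real.log ((Finset.univ.gcd v : ℕ) : ℝ) =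
      ∑ d ∈ n.divisors.filter (fun d => d ^ k ∣ n),
        ArithmeticFunction.vonMangoldt d * (piltz k (n / d ^ k) : ℝ) := by
  have hn0 : n ≠ 0 := by omega
  have i0 : Fin k := ⟨0, by omega⟩
  -- Step 1: expand log gcd as a sum of Λ over divisors of n dividing the gcd
  have h1 : ∀ v ∈ tuplesProd k n, Real.log ((Finset.univ.gcd v : ℕ) : ℝ) =
      ∑ d ∈ n.divisors,
        if d ∣ Finset.univ.gcd v then ArithmeticFunction.vonMangoldt d else 0 := by
    intro v hv
    have hvp : ∏ i, v i = n := (mem_tuplesProd hn0).mp hv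
    have hg : Finset.univ.gcd v ∣ n :=
      (Finset.gcd_dvd (mem_univ i0)).trans (hvp ▸ Finset.dvd_prod_of_mem v (mem_univ i0))
    have hgne : Finset.univ.gcd v ≠ 0 := fun h =>
      hn0 (Nat.eq_zero_of_zero_dvd (h ▸ hg))
    have hdiv : (Finset.univ.gcd v).divisors
        = n.divisors.filter (fun d => d ∣ Finset.univ.gcd v) := by
      ext d
      simp only [Nat.mem_divisors, mem_filter]
      exact ⟨fun h => ⟨⟨h.1.trans hg, hn0⟩, h.1⟩, fun h => ⟨h.2, hgne⟩⟩
    rw [← ArithmeticFunction.vonMangoldt_sum (n := Finset.univ.gcd v), hdiv,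
      Finset.sum_filter]
  rw [Finset.sum_congr rfl h1, Finset.sum_comm]
  rw [Finset.sum_filter]
  refine Finset.sum_congr rfl fun d hd => ?_
  have hd0 : d ≠ 0 := (Nat.pos_of_mem_divisors hd).ne'
  have hdk0 : d ^ k ≠ 0 := pow_ne_zero k hd0
  have hdkpos : 0 < d ^ k := Nat.pos_of_ne_zero hdk0
  -- inner sum equals Λ d * card of tuples all divisible by d
  rw [← Finset.sum_filter]
  have hcard : ((tuplesProd k n).filter (fun v => d ∣ Finset.univ.gcd v)).card
      = if d ^ k ∣ n then piltz k (n / d ^ k) else 0 := by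
    split_ifs with hdk
    · have hq0 : n / d ^ k ≠ 0 := fun h =>
        hn0 (by rw [← Nat.div_mul_cancel hdk, h, zero_mul])
      refine Finset.card_bij' (fun v _ => fun j => v j / d)
        (fun w _ => fun j => d * w j) ?_ ?_ ?_ ?_
      · intro v hv
        simp only [mem_filter] at hv
        have hvp : ∏ i, v i = n := (mem_tuplesProd hn0).mp hv.1
        have hdvd : ∀ j, d ∣ v j := fun j => hv.2.trans (Finset.gcd_dvd (mem_univ j))
        have key : d ^ k * ∏ j, v j / d = n := by
          calc d ^ k * ∏ j, v j / d = ∏ j : Fin k, d * (v j / d) := by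
                rw [Finset.prod_mul_distrib, Finset.prod_const, Finset.card_univ,
                  Fintype.card_fin]
            _ = ∏ j, v j := Finset.prod_congr rfl fun j _ => Nat.mul_div_cancel' (hdvd j)
            _ = n := hvp
        rw [mem_tuplesProd hq0]
        show ∏ i, v i / d = n / d ^ k
        rw [← key, Nat.mul_div_cancel_left _ hdkpos]
      · intro w hw
        have hwp : ∏ i, w i = n / d ^ k := (mem_tuplesProd (fun h =>
          hn0 (by rw [← Nat.div_mul_cancel hdk, h, zero_mul]))).mp hw
        simp only [mem_filter]
        constructor
        · rw [mem_tuplesProd hn0]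
          show ∏ i, d * w i = n
          rw [Finset.prod_mul_distrib, Finset.prod_const, Finset.card_univ,
            Fintype.card_fin, hwp, Nat.mul_div_cancel' hdk]
        · exact Finset.dvd_gcd fun j _ => Dvd.intro (w j) rfl
      · intro v hv
        simp only [mem_filter] at hv
        funext j
        exact Nat.mul_div_cancel' (hv.2.trans (Finset.gcd_dvd (mem_univ j)))
      · intro w _
        funext j
        exact Nat.mul_div_cancel_left _ (Nat.pos_of_ne_zero hd0)
    · rw [Finset.card_eq_zero, Finset.eq_empty_iff_forall_notMem]
      intro v hv
      simp only [mem_filter] at hv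
      have hvp : ∏ i, v i = n := (mem_tuplesProd hn0).mp hv.1
      exact hdk (by
        calc d ^ k = ∏ _j : Fin k, d := by
              rw [Finset.prod_const, Finset.card_univ, Fintype.card_fin]
        _ ∣ ∏ j, v j := Finset.prod_dvd_prod_of_dvd _ _
              (fun j _ => hv.2.trans (Finset.gcd_dvd (mem_univ j)))
        _ = n := hvp)
  rw [Finset.sum_const, hcard]
  split_ifs with hdk
  · rw [nsmul_eq_mul, mul_comm]
  · simp
end
end
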